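/- Let p be an odd prime, α ∈ ℤ_p^×, μ ≥ 0, k ≥ 1 with o_ᾱ | k, and let z = z^μ(α) be the unique maximal-valuation root of t_{o_ᾱ}(x) = det(g^{o_ᾱ}-1). Then for any β ∈ ℚ_p with v(β) > 2/(p-1) - μ, one has v(t_k(β)) = v(β - z) + 2v(k) + μ. -/

import Mathlib

/-!
Put `w = p^μ β`, so that `p ∣ w`, and let `ω² = w`. Then `t_k(β) = T_k(w) = N((α + ω)^k - 1)`,
where `T_k` is `t_k` for `μ = 0` and `N` is the norm of `ℤ_p[ω]`. With `u = (α + ω)^o` and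
`k = o m`, the factorisation `N(u^m - 1) = N(1 + u + ⋯ + u^(m-1)) · N(u - 1)` splits the claim
in two.

* `|N(u - 1)| = |T_o(w) - T_o(p^μ z)| = |w - p^μ z|`, since `T_o` has integral coefficients and a
  unit linear coefficient, and both arguments lie in `pℤ_p`.
* `|N(1 + u + ⋯ + u^(m-1))| = |m|²` (lifting the exponent). Since `u ≡ 1` modulo `M = (p, ω)`, the
  geometric sum is a unit when `p ∤ m`. For `m = p`, expanding in `d = u - 1 ∈ M` gives
  `1 + u + ⋯ + u^(p-1) ∈ p + pM`, because `M² ⊆ (p)`; the last term `d^(p-1)` needs `p ≥ 5`, or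
  `p² ∣ N(d)` when `p = 3`, which is what `v(β) > 2/(p-1) - μ` provides.
-/

open Polynomial

/-- `r_k(x) = Σᵢ C(k,2i) α^{k-2i} p^{μi} x^i`. -/
noncomputable def rPoly (p : ℕ) [Fact p.Prime] (α : ℤ_[p]) (μ k : ℕ) : Polynomial ℤ_[p] :=
  ∑ i ∈ Finset.range (k + 1),
    C ((k.choose (2 * i) : ℤ_[p]) * α ^ (k - 2 * i) * (p : ℤ_[p]) ^ (μ * i)) * X ^ i

/-- `s_k(x) = Σᵢ C(k,2i+1) α^{k-2i-1} p^{μi} x^i`. -/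
noncomputable def sPoly (p : ℕ) [Fact p.Prime] (α : ℤ_[p]) (μ k : ℕ) : Polynomial ℤ_[p] :=
  ∑ i ∈ Finset.range (k + 1),
    C ((k.choose (2 * i + 1) : ℤ_[p]) * α ^ (k - (2 * i + 1)) * (p : ℤ_[p]) ^ (μ * i)) * X ^ i

/-- `t_k(x) = det(g^k - 1) = (r_k(x) - 1)² - x p^μ s_k(x)²`. -/
noncomputable def tPoly (p : ℕ) [Fact p.Prime] (α : ℤ_[p]) (μ k : ℕ) : Polynomial ℤ_[p] :=
  (rPoly p α μ k - 1) ^ 2 - X * C ((p : ℤ_[p]) ^ μ) * (sPoly p α μ k) ^ 2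

open Finset

theorem Finset.sum_range_two_mul {M : Type*} [AddCommMonoid M] (f : ℕ → M) (n : ℕ) :
    ∑ m ∈ range (2 * n), f m = ∑ i ∈ range n, (f (2 * i) + f (2 * i + 1)) := by
  induction n with
  | zero => simp
  | succ n ih => rw [Nat.mul_succ, sum_range_succ, sum_range_succ, ih, sum_range_succ, add_assoc]

theorem geom_sum_one_add_eq_sum_choose {R : Type*} [CommRing R] (d : R) (n : ℕ) :
    ∑ i ∈ range n, (1 + d) ^ i = ∑ j ∈ range n, (n.choose (j + 1) : R) * d ^ j := by
  induction n with
  | zero => simp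
  | succ n ih =>
    rw [sum_range_succ, ih, add_comm 1 d, add_pow]
    simp only [one_pow, mul_one, Nat.choose_succ_succ', Nat.cast_add, add_mul, sum_add_distrib]
    rw [sum_range_succ (fun j => (n.choose (j + 1) : R) * d ^ j) n, Nat.choose_succ_self,
      Nat.cast_zero, zero_mul, add_zero, add_comm]
    exact congrArg₂ _ (sum_congr rfl fun j _ => mul_comm _ _) rfl

theorem geom_sum_one_add_prime_sub_mem {R : Type*} [CommRing R] {p : ℕ} (hp : p.Prime)
    {I : Ideal R} {d : R} (hd : d ∈ I) (hdp : d ^ (p - 1) ∈ Ideal.span {(p : R)} * I) :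
    ∑ i ∈ range p, (1 + d) ^ i - p ∈ Ideal.span {(p : R)} * I := by
  obtain ⟨n, rfl⟩ : ∃ n, p = n + 2 := ⟨p - 2, by have := hp.two_le; omega⟩
  rw [geom_sum_one_add_eq_sum_choose, sum_range_succ', sum_range_succ]
  simp only [Nat.choose_one_right, pow_zero, mul_one, zero_add, Nat.choose_self, Nat.cast_one,
    one_mul, add_sub_cancel_right]
  refine Ideal.add_mem _ (Ideal.sum_mem _ fun j hj => ?_) (by simpa using hdp)
  obtain ⟨c, hc⟩ := hp.dvd_choose_self (k := j + 2) (by omega) (by simp at hj; omega)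
  rw [hc, Nat.cast_mul, mul_assoc]
  exact Ideal.mul_mem_mul (Ideal.mem_span_singleton_self _)
    (Ideal.mul_mem_left _ _ (Ideal.pow_mem_of_mem _ hd _ (by omega)))

namespace QuadraticAlgebra

variable {R : Type*} [CommRing R]

theorem omega_pow_two_mul (w : R) (i : ℕ) :
    (ω : QuadraticAlgebra R w 0) ^ (2 * i) = algebraMap R _ (w ^ i) := by
  rw [pow_mul, sq, omega_mul_omega_eq_mk, map_pow]; rfl

theorem algebraMap_add_omega_pow (a w : R) (k : ℕ) :
    (algebraMap R _ a + ω : QuadraticAlgebra R w 0) ^ k =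
      ⟨∑ i ∈ range (k + 1), k.choose (2 * i) * a ^ (k - 2 * i) * w ^ i,
        ∑ i ∈ range (k + 1), k.choose (2 * i + 1) * a ^ (k - (2 * i + 1)) * w ^ i⟩ := by
  set f : ℕ → QuadraticAlgebra R w 0 := fun m =>
    ω ^ m * algebraMap R _ (a ^ (k - m)) * algebraMap R _ (k.choose m)
  have hsum : ∑ m ∈ range (k + 1), f m = ∑ m ∈ range (2 * (k + 1)), f m := by
    rw [two_mul, sum_range_add f (k + 1) (k + 1), left_eq_add]
    exact sum_eq_zero fun m _ => by simp [f, Nat.choose_eq_zero_of_lt (by omega : k < k + 1 + m)]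
  rw [add_comm, add_pow]
  simp only [← map_pow, ← map_natCast (algebraMap R (QuadraticAlgebra R w 0))]
  rw [hsum, sum_range_two_mul, mk_eq_add_smul_omega, map_sum, sum_smul, ← sum_add_distrib]
  refine sum_congr rfl fun i _ => ?_
  simp only [f, pow_succ, omega_pow_two_mul, mul_comm _ ω, ← map_mul]
  ext <;> simp [-map_mul, -map_pow, algebraMap_re, algebraMap_im] <;> ring

theorem natCast_dvd_iff {a b : R} {n : ℕ} {x : QuadraticAlgebra R a b} :
    (n : QuadraticAlgebra R a b) ∣ x ↔ (n : R) ∣ x.re ∧ (n : R) ∣ x.im := by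
  rw [← map_natCast (algebraMap R _), algebraMap_dvd_iff]

theorem norm_pow_sub_one {a b : R} (u : QuadraticAlgebra R a b) (n : ℕ) :
    (u ^ n - 1).norm = (∑ i ∈ range n, u ^ i).norm * (u - 1).norm := by
  rw [← map_mul, geom_sum_mul]

end QuadraticAlgebra

namespace PadicInt
variable {p : ℕ} [Fact p.Prime]

theorem toZMod_eq_zero_iff {x : ℤ_[p]} : toZMod x = 0 ↔ (p : ℤ_[p]) ∣ x := by
  rw [← RingHom.mem_ker, ker_toZMod, maximalIdeal_eq_span_p, Ideal.mem_span_singleton]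

theorem toZMod_eq_toZMod_iff {x y : ℤ_[p]} : toZMod x = toZMod y ↔ (p : ℤ_[p]) ∣ x - y := by
  rw [← sub_eq_zero, ← map_sub, toZMod_eq_zero_iff]

theorem toZMod_eq_one_iff {x : ℤ_[p]} : toZMod x = 1 ↔ (p : ℤ_[p]) ∣ x - 1 := by
  rw [← map_one toZMod, toZMod_eq_toZMod_iff]

theorem isUnit_iff_toZMod_ne_zero {x : ℤ_[p]} : IsUnit x ↔ toZMod x ≠ 0 := by
  rw [ne_eq, ← RingHom.mem_ker, ker_toZMod, IsLocalRing.mem_maximalIdeal, mem_nonunits_iff,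
    not_not]

theorem norm_eval_sub_eval_of_isUnit {D : ℤ_[p][X]} (hD : IsUnit (D.derivative.eval 0))
    {a b : ℤ_[p]} (ha : (p : ℤ_[p]) ∣ a) (hb : (p : ℤ_[p]) ∣ b) :
    ‖D.eval a - D.eval b‖ = ‖a - b‖ := by
  obtain ⟨c, hc⟩ := binomExpansion D b (a - b)
  rw [add_sub_cancel] at hc
  have hcong : (p : ℤ_[p]) ∣ D.derivative.eval b + c * (a - b) - D.derivative.eval 0 := by
    rw [add_sub_right_comm]
    exact dvd_add (hb.trans (by simpa using sub_dvd_eval_sub b 0 D.derivative))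
      (dvd_mul_of_dvd_right (dvd_sub ha hb) _)
  have hunit : IsUnit (D.derivative.eval b + c * (a - b)) := by
    rwa [isUnit_iff_toZMod_ne_zero, toZMod_eq_toZMod_iff.2 hcong, ← isUnit_iff_toZMod_ne_zero]
  rw [show D.eval a - D.eval b = (a - b) * (D.derivative.eval b + c * (a - b)) by
    rw [hc]; ring, norm_mul, isUnit_iff.mp hunit, mul_one]

end PadicInt

namespace QuadraticAlgebra

variable {p : ℕ} [Fact p.Prime] {w : ℤ_[p]} (hw : (p : ℤ_[p]) ∣ w)

/-- Reduction modulo the maximal ideal `(p, ω)`; it is multiplicative because `p ∣ w`. -/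
noncomputable def toZMod : QuadraticAlgebra ℤ_[p] w 0 →+* ZMod p where
  toFun x := PadicInt.toZMod x.re
  map_one' := by simp
  map_mul' x y := by simp [PadicInt.toZMod_eq_zero_iff.2 hw]
  map_zero' := by simp
  map_add' x y := by simp

@[simp]
theorem toZMod_apply (x : QuadraticAlgebra ℤ_[p] w 0) : toZMod hw x = PadicInt.toZMod x.re := rfl

theorem mem_ker_toZMod {x : QuadraticAlgebra ℤ_[p] w 0} :
    x ∈ RingHom.ker (toZMod hw) ↔ (p : ℤ_[p]) ∣ x.re := by
  rw [RingHom.mem_ker, toZMod_apply, PadicInt.toZMod_eq_zero_iff]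

theorem isUnit_norm_of_toZMod_ne_zero {x : QuadraticAlgebra ℤ_[p] w 0} (hx : toZMod hw x ≠ 0) :
    IsUnit x.norm := by
  rw [PadicInt.isUnit_iff_toZMod_ne_zero, norm_def]
  simpa [PadicInt.toZMod_eq_zero_iff.2 hw, ← sq] using hx

theorem ker_toZMod_mul_ker_toZMod_le :
    RingHom.ker (toZMod hw) * RingHom.ker (toZMod hw) ≤
      Ideal.span {(p : QuadraticAlgebra ℤ_[p] w 0)} := by
  refine Ideal.mul_le.2 fun x hx y hy => ?_
  rw [mem_ker_toZMod] at hx hy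
  rw [Ideal.mem_span_singleton, natCast_dvd_iff, re_mul, im_mul]
  exact ⟨dvd_add (dvd_mul_of_dvd_left hx _) (dvd_mul_of_dvd_left (dvd_mul_of_dvd_left hw _) _),
    by simpa using dvd_add (dvd_mul_of_dvd_left hx _) (dvd_mul_of_dvd_right hy _)⟩

theorem pow_pred_mem_span_mul_ker (hp : p ≠ 2) {d : QuadraticAlgebra ℤ_[p] w 0}
    (hd : d ∈ RingHom.ker (toZMod hw)) (h3 : p = 3 → (p : ℤ_[p]) ^ 2 ∣ d.norm) :
    d ^ (p - 1) ∈ Ideal.span {(p : QuadraticAlgebra ℤ_[p] w 0)} * RingHom.ker (toZMod hw) := by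
  have hdd : d * d ∈ Ideal.span {(p : QuadraticAlgebra ℤ_[p] w 0)} :=
    ker_toZMod_mul_ker_toZMod_le hw (Ideal.mul_mem_mul hd hd)
  by_cases hp3 : p = 3
  · obtain ⟨y, hy⟩ := Ideal.mem_span_singleton.1 hdd
    rw [show p - 1 = 2 by omega, sq, hy]
    refine Ideal.mul_mem_mul (Ideal.mem_span_singleton_self _) ((mem_ker_toZMod hw).2 ?_)
    have hre : (p : ℤ_[p]) * y.re = 2 * d.re ^ 2 - d.norm := by
      have h := congrArg re hy
      simp only [re_mul, re_natCast, im_natCast] at h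
      rw [norm_def]
      linear_combination -h
    rw [← mul_dvd_mul_iff_left (Nat.cast_ne_zero.2 (Fact.out : p.Prime).ne_zero), ← sq, hre]
    exact dvd_sub (dvd_mul_of_dvd_right (pow_dvd_pow_of_dvd ((mem_ker_toZMod hw).1 hd) 2) _)
      (h3 hp3)
  · obtain ⟨n, hn⟩ : ∃ n, p - 1 = n + 1 + 2 :=
      ⟨p - 4, by have := (Fact.out : p.Prime).two_le; omega⟩
    rw [hn, pow_add, sq, mul_comm (d ^ (n + 1))]
    exact Ideal.mul_mem_mul hdd (Ideal.pow_mem_of_mem _ hd _ n.succ_pos)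

theorem norm_norm_geom_sum_of_not_dvd {u : QuadraticAlgebra ℤ_[p] w 0} (hu : toZMod hw u = 1)
    {m : ℕ} (hm : ¬p ∣ m) : ‖(∑ i ∈ range m, u ^ i).norm‖ = 1 := by
  refine PadicInt.isUnit_iff.1 (isUnit_norm_of_toZMod_ne_zero hw ?_)
  simpa [-toZMod_apply, map_sum, hu, ZMod.natCast_eq_zero_iff] using hm

theorem norm_norm_geom_sum_prime (hp : p ≠ 2) {u : QuadraticAlgebra ℤ_[p] w 0}
    (hu : toZMod hw u = 1) (h3 : p = 3 → (p : ℤ_[p]) ^ 2 ∣ (u - 1).norm) :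
    ‖(∑ i ∈ range p, u ^ i).norm‖ = ‖(p : ℤ_[p])‖ ^ 2 := by
  have hd : u - 1 ∈ RingHom.ker (toZMod hw) := by simp [-toZMod_apply, hu]
  obtain ⟨y, hy, hpy⟩ := Ideal.mem_span_singleton_mul.1 <|
    geom_sum_one_add_prime_sub_mem Fact.out hd (pow_pred_mem_span_mul_ker hw hp hd h3)
  rw [add_sub_cancel] at hpy
  have hy1 : IsUnit (1 + y).norm :=
    isUnit_norm_of_toZMod_ne_zero hw (by simp [-toZMod_apply, RingHom.mem_ker.1 hy])
  rw [show ∑ i ∈ range p, u ^ i = p * (1 + y) by rw [mul_one_add, hpy, add_sub_cancel],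
    map_mul, norm_natCast, norm_mul, PadicInt.isUnit_iff.1 hy1, mul_one, norm_pow]

theorem norm_norm_pow_sub_one (hp : p ≠ 2) {u : QuadraticAlgebra ℤ_[p] w 0}
    (hu : toZMod hw u = 1) (h3 : p = 3 → (p : ℤ_[p]) ^ 2 ∣ (u - 1).norm) (m : ℕ) :
    ‖(u ^ m - 1).norm‖ = ‖(u - 1).norm‖ * ‖(m : ℤ_[p])‖ ^ 2 := by
  induction m using Nat.strong_induction_on with
  | _ m ih =>
  by_cases hpm : p ∣ m
  · obtain ⟨n, rfl⟩ := hpm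
    rcases n.eq_zero_or_pos with rfl | hn
    · simp
    have hv : toZMod hw (u ^ n) = 1 := by simp [-toZMod_apply, hu]
    have hv3 : p = 3 → (p : ℤ_[p]) ^ 2 ∣ (u ^ n - 1).norm := fun h =>
      (h3 h).trans (norm_pow_sub_one u n ▸ dvd_mul_left _ _)
    rw [mul_comm p n, pow_mul, norm_pow_sub_one, norm_mul,
      norm_norm_geom_sum_prime hw hp hv hv3, ih n (lt_mul_left hn (Fact.out : p.Prime).one_lt),
      Nat.cast_mul, norm_mul]
    ring
  · rw [norm_pow_sub_one, norm_mul, norm_norm_geom_sum_of_not_dvd hw hu hpm,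
      PadicInt.norm_natCast_eq_one_iff.2 ((Nat.Prime.coprime_iff_not_dvd Fact.out).2 hpm)]
    ring

end QuadraticAlgebra

section tPoly

open QuadraticAlgebra

variable {p : ℕ} [Fact p.Prime] (α : ℤ_[p])

theorem eval_rPoly_zero_eq_re (w : ℤ_[p]) (k : ℕ) :
    (rPoly p α 0 k).eval w = ((algebraMap ℤ_[p] _ α + ω : QuadraticAlgebra ℤ_[p] w 0) ^ k).re := by
  rw [algebraMap_add_omega_pow]
  simp [rPoly, eval_finsetSum]

theorem eval_sPoly_zero_eq_im (w : ℤ_[p]) (k : ℕ) :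
    (sPoly p α 0 k).eval w = ((algebraMap ℤ_[p] _ α + ω : QuadraticAlgebra ℤ_[p] w 0) ^ k).im := by
  rw [algebraMap_add_omega_pow]
  simp [sPoly, eval_finsetSum]

theorem eval_tPoly_zero_eq_norm (w : ℤ_[p]) (k : ℕ) :
    (tPoly p α 0 k).eval w =
      ((algebraMap ℤ_[p] _ α + ω : QuadraticAlgebra ℤ_[p] w 0) ^ k - 1).norm := by
  simp [tPoly, eval_rPoly_zero_eq_re, eval_sPoly_zero_eq_im, norm_def]
  ring

theorem rPoly_eq_comp (μ k : ℕ) :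
    rPoly p α μ k = (rPoly p α 0 k).comp (C ((p : ℤ_[p]) ^ μ) * X) := by
  simp only [rPoly, Polynomial.sum_comp, mul_comp, C_comp, X_pow_comp, mul_pow, ← Polynomial.C_pow,
    ← pow_mul, zero_mul, pow_zero, mul_one, ← mul_assoc, ← Polynomial.C_mul]

theorem sPoly_eq_comp (μ k : ℕ) :
    sPoly p α μ k = (sPoly p α 0 k).comp (C ((p : ℤ_[p]) ^ μ) * X) := by
  simp only [sPoly, Polynomial.sum_comp, mul_comp, C_comp, X_pow_comp, mul_pow, ← Polynomial.C_pow,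
    ← pow_mul, zero_mul, pow_zero, mul_one, ← mul_assoc, ← Polynomial.C_mul]

theorem tPoly_eq_comp (μ k : ℕ) :
    tPoly p α μ k = (tPoly p α 0 k).comp (C ((p : ℤ_[p]) ^ μ) * X) := by
  simp only [tPoly, rPoly_eq_comp α μ, sPoly_eq_comp α μ, sub_comp, pow_comp, mul_comp, one_comp,
    X_comp, pow_zero, C_1, mul_one]
  ring

theorem eval_map_tPoly {μ : ℕ} {x : ℚ_[p]} {W : ℤ_[p]} (hW : (W : ℚ_[p]) = p ^ μ * x) (k : ℕ) :
    ((tPoly p α μ k).map (algebraMap ℤ_[p] ℚ_[p])).eval x =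
      (((tPoly p α 0 k).eval W : ℤ_[p]) : ℚ_[p]) := by
  rw [tPoly_eq_comp, Polynomial.map_comp, eval_comp]
  have hx : ((C ((p : ℤ_[p]) ^ μ) * X).map (algebraMap ℤ_[p] ℚ_[p])).eval x = (W : ℚ_[p]) := by
    simp [hW]
  rw [hx, eval_map_algebraMap]
  exact aeval_algebraMap_apply ℚ_[p] W _

theorem eval_zero_rPoly (k : ℕ) : (rPoly p α 0 k).eval 0 = α ^ k := by
  simp [rPoly, eval_finsetSum, sum_range_succ']

theorem eval_zero_sPoly (k : ℕ) : (sPoly p α 0 k).eval 0 = k * α ^ (k - 1) := by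
  simp [sPoly, eval_finsetSum, sum_range_succ']

theorem isUnit_eval_zero_derivative_tPoly {o : ℕ} (hα : (p : ℤ_[p]) ∣ α ^ o - 1) (ho : ¬p ∣ o) :
    IsUnit ((tPoly p α 0 o).derivative.eval 0) := by
  have h1 : PadicInt.toZMod α ^ o = 1 := by rwa [← map_pow, PadicInt.toZMod_eq_one_iff]
  have hα0 : PadicInt.toZMod α ≠ 0 :=
    (IsUnit.of_pow_eq_one h1 (by rintro rfl; exact ho (dvd_zero p))).ne_zero
  have ho0 : (o : ZMod p) ≠ 0 := by rwa [ne_eq, ZMod.natCast_eq_zero_iff]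
  rw [PadicInt.isUnit_iff_toZMod_ne_zero]
  simp [tPoly, derivative_mul, derivative_sq, eval_zero_rPoly, eval_zero_sPoly, h1, ho0, hα0]

theorem norm_eval_tPoly_mul {o : ℕ} (hp : p ≠ 2) (hα : (p : ℤ_[p]) ∣ α ^ o - 1) (ho : ¬p ∣ o)
    {W Wz : ℤ_[p]} (hW : (p : ℤ_[p]) ∣ W) (hWz : (p : ℤ_[p]) ∣ Wz)
    (h3 : p = 3 → (p : ℤ_[p]) ^ 2 ∣ W - Wz) (hroot : (tPoly p α 0 o).eval Wz = 0) (m : ℕ) :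
    ‖(tPoly p α 0 (o * m)).eval W‖ = ‖W - Wz‖ * ‖(m : ℤ_[p])‖ ^ 2 := by
  set u := (algebraMap ℤ_[p] (QuadraticAlgebra ℤ_[p] W 0) α + ω) ^ o
  have hu : toZMod hW u = 1 := by
    have h : toZMod hW (algebraMap ℤ_[p] _ α + ω) = PadicInt.toZMod α := by simp
    rwa [map_pow, h, ← map_pow, PadicInt.toZMod_eq_one_iff]
  have hnorm : (u - 1).norm = (tPoly p α 0 o).eval W - (tPoly p α 0 o).eval Wz := by
    rw [hroot, sub_zero, eval_tPoly_zero_eq_norm]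
  have hu3 : p = 3 → (p : ℤ_[p]) ^ 2 ∣ (u - 1).norm := fun h =>
    (h3 h).trans (hnorm ▸ sub_dvd_eval_sub W Wz _)
  rw [eval_tPoly_zero_eq_norm, pow_mul, norm_norm_pow_sub_one hW hp hu hu3, hnorm,
    PadicInt.norm_eval_sub_eval_of_isUnit (isUnit_eval_zero_derivative_tPoly α hα ho) hW hWz]

end tPoly

section Lifts

variable {p : ℕ} [Fact p.Prime]

theorem Padic.valuation_eq_of_norm_eq {x y : ℚ_[p]} (h : ‖x‖ = ‖y‖) :
    x.valuation = y.valuation := by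
  rcases eq_or_ne y 0 with rfl | hy
  · rw [norm_zero, norm_eq_zero] at h
    rw [h]
  have hx : x ≠ 0 := norm_ne_zero_iff.1 (h ▸ norm_ne_zero_iff.2 hy)
  rw [Padic.norm_eq_zpow_neg_valuation hx, Padic.norm_eq_zpow_neg_valuation hy] at h
  have hp : (1 : ℝ) < p := by exact_mod_cast (Fact.out : p.Prime).one_lt
  exact neg_inj.1 (zpow_right_injective₀ (by positivity) hp.ne' h)

theorem Padic.valuation_p_pow_mul (μ : ℕ) {x : ℚ_[p]} (hx : x ≠ 0) :
    ((p : ℚ_[p]) ^ μ * x).valuation = μ + x.valuation := by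
  rw [Padic.valuation_mul (pow_ne_zero _ (Nat.cast_ne_zero.2 (Fact.out : p.Prime).ne_zero)) hx,
    Padic.valuation_pow, Padic.valuation_p, mul_one]

theorem PadicInt.exists_coe_eq_of_le_valuation {x : ℚ_[p]} {n : ℕ}
    (h : x ≠ 0 → (n : ℤ) ≤ x.valuation) : ∃ X : ℤ_[p], (X : ℚ_[p]) = x ∧ (p : ℤ_[p]) ^ n ∣ X := by
  rcases eq_or_ne x 0 with rfl | hx
  · exact ⟨0, by simp, dvd_zero _⟩
  have hn := h hx
  have hx1 : ‖x‖ ≤ 1 := (Padic.norm_le_one_iff_val_nonneg x).2 (by omega)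
  set X : ℤ_[p] := ⟨x, hx1⟩
  have hX : X ≠ 0 := fun h0 => hx (PadicInt.coe_eq_zero.2 h0)
  refine ⟨X, rfl, ?_⟩
  rw [← Ideal.mem_span_singleton, PadicInt.mem_span_pow_iff_le_valuation _ hX,
    ← Nat.cast_le (α := ℤ), ← PadicInt.valuation_coe]
  exact hn

theorem exists_coe_eq_p_pow_mul_of_valuation_gt {β : ℚ_[p]} {μ : ℕ}
    (hβ : (β.valuation : ℝ) > 2 / ((p : ℝ) - 1) - μ) :
    ∃ W : ℤ_[p], (W : ℚ_[p]) = p ^ μ * β ∧ (p : ℤ_[p]) ∣ W ∧ (p = 3 → (p : ℤ_[p]) ^ 2 ∣ W) := by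
  have hp : (1 : ℝ) < p := by exact_mod_cast (Fact.out : p.Prime).one_lt
  have hv : ∀ n : ℕ, ((n : ℝ) - 1 ≤ 2 / ((p : ℝ) - 1)) →
      p ^ μ * β ≠ 0 → (n : ℤ) ≤ ((p : ℚ_[p]) ^ μ * β).valuation := fun n hn h => by
    rw [Padic.valuation_p_pow_mul μ (right_ne_zero_of_mul h)]
    have : ((n : ℤ) : ℝ) < μ + β.valuation + 1 := by push_cast; linarith
    exact_mod_cast Int.lt_add_one_iff.1 (by exact_mod_cast this)
  obtain ⟨W, hW, h1⟩ := PadicInt.exists_coe_eq_of_le_valuation (hv 1 (by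
    rw [Nat.cast_one, sub_self]; exact div_nonneg zero_le_two (by linarith)))
  refine ⟨W, hW, by simpa using h1, fun h3 => ?_⟩
  obtain ⟨W', hW', h2⟩ := PadicInt.exists_coe_eq_of_le_valuation (hv 2 (by subst h3; norm_num))
  rwa [PadicInt.ext (hW.trans hW'.symm)]

theorem exists_coe_eq_p_pow_mul_of_valuation_eq {z : ℚ_[p]} {μ : ℕ} {a : ℤ_[p]}
    (ha : (p : ℤ_[p]) ∣ a) (ha0 : a ≠ 0) (hzv : z.valuation = 2 * a.valuation - μ) :
    ∃ Wz : ℤ_[p], (Wz : ℚ_[p]) = p ^ μ * z ∧ (p : ℤ_[p]) ^ 2 ∣ Wz := by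
  have hva : 1 ≤ a.valuation := by
    rwa [← PadicInt.mem_span_pow_iff_le_valuation a ha0, pow_one, Ideal.mem_span_singleton]
  refine PadicInt.exists_coe_eq_of_le_valuation fun h => ?_
  rw [Padic.valuation_p_pow_mul μ (right_ne_zero_of_mul h), hzv]
  omega

theorem dvd_sub_one_of_forall_dvd_pow_sub_one_iff {α : ℤ_[p]} (hα : IsUnit α) {o : ℕ}
    (hoa : ∀ m : ℕ, 0 < m → ((p : ℤ_[p]) ∣ α ^ m - 1 ↔ o ∣ m)) : o ∣ p - 1 := by
  refine (hoa (p - 1) (Nat.sub_pos_of_lt (Fact.out : p.Prime).one_lt)).1 ?_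
  rw [← PadicInt.toZMod_eq_one_iff, map_pow,
    ZMod.pow_card_sub_one_eq_one (hα.map PadicInt.toZMod).ne_zero]

end Lifts

theorem valuation_eval_map_tPoly_mul {p : ℕ} [Fact p.Prime] (hp : p ≠ 2) {α : ℤ_[p]} {μ o : ℕ}
    (hα : (p : ℤ_[p]) ∣ α ^ o - 1) (ho : ¬p ∣ o) {β z : ℚ_[p]} {W Wz : ℤ_[p]}
    (hW : (W : ℚ_[p]) = p ^ μ * β) (hWz : (Wz : ℚ_[p]) = p ^ μ * z) (hpW : (p : ℤ_[p]) ∣ W)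
    (hpWz : (p : ℤ_[p]) ∣ Wz) (h3 : p = 3 → (p : ℤ_[p]) ^ 2 ∣ W - Wz)
    (hz : ((tPoly p α μ o).map (algebraMap ℤ_[p] ℚ_[p])).eval z = 0) (hβz : β ≠ z) {m : ℕ}
    (hm : m ≠ 0) :
    (((tPoly p α μ (o * m)).map (algebraMap ℤ_[p] ℚ_[p])).eval β).valuation =
      (β - z).valuation + 2 * (padicValNat p (o * m) : ℤ) + μ := by
  have hroot : (tPoly p α 0 o).eval Wz = 0 := by
    rwa [eval_map_tPoly α hWz, PadicInt.coe_eq_zero] at hz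
  have key := norm_eval_tPoly_mul α hp hα ho hpW hpWz h3 hroot m
  have hβz' : β - z ≠ 0 := sub_ne_zero.2 hβz
  have hk : ((o * m : ℕ) : ℚ_[p]) ^ 2 ≠ 0 :=
    pow_ne_zero _ (Nat.cast_ne_zero.2 (mul_ne_zero (fun h => ho (h ▸ dvd_zero p)) hm))
  rw [eval_map_tPoly α hW,
    Padic.valuation_eq_of_norm_eq (y := (p : ℚ_[p]) ^ μ * ((β - z) * ((o * m : ℕ) : ℚ_[p]) ^ 2)),
    Padic.valuation_p_pow_mul μ (mul_ne_zero hβz' hk), Padic.valuation_mul hβz' hk,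
    Padic.valuation_pow, Padic.valuation_natCast]
  · ring
  rw [PadicInt.padic_norm_e_of_padicInt, key, PadicInt.norm_def, PadicInt.coe_sub, hW, hWz,
    PadicInt.norm_def, PadicInt.coe_natCast, Nat.cast_mul, ← mul_sub]
  simp only [norm_mul, norm_pow,
    Padic.norm_natCast_eq_one_iff.2 ((Nat.Prime.coprime_iff_not_dvd Fact.out).2 ho)]
  ring

theorem stmt_15_general (p : ℕ) [Fact p.Prime] (hp : p ≠ 2) (α : ℤ_[p]) (hα : IsUnit α) (μ : ℕ)
    (o : ℕ)
    (hoa : ∀ m : ℕ, 0 < m → ((p : ℤ_[p]) ∣ α ^ m - 1 ↔ o ∣ m))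
    (hα1 : α ^ o ≠ 1)
    (z : ℚ_[p])
    (hz : Polynomial.eval z ((tPoly p α μ o).map (algebraMap ℤ_[p] ℚ_[p])) = 0)
    (hzv : z.valuation = 2 * (α ^ o - 1).valuation - μ)
    (k : ℕ) (hk : 1 ≤ k) (hok : o ∣ k)
    (β : ℚ_[p]) (hβ : ((β.valuation : ℝ)) > 2 / ((p : ℝ) - 1) - μ) (hβz : β ≠ z) :
    (Polynomial.eval β ((tPoly p α μ k).map (algebraMap ℤ_[p] ℚ_[p]))).valuation =
      (β - z).valuation + 2 * (padicValNat p k : ℤ) + μ := by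
  have hop : o ∣ p - 1 := dvd_sub_one_of_forall_dvd_pow_sub_one_iff hα hoa
  have hp1 := (Fact.out : p.Prime).one_lt
  have hpo : ¬p ∣ o := fun h => absurd (Nat.le_of_dvd (by omega) (h.trans hop)) (by omega)
  have hred : (p : ℤ_[p]) ∣ α ^ o - 1 :=
    (hoa o (Nat.pos_of_dvd_of_pos hop (by omega))).2 dvd_rfl
  obtain ⟨W, hW, hpW, hW3⟩ := exists_coe_eq_p_pow_mul_of_valuation_gt hβ
  obtain ⟨Wz, hWz, hpWz⟩ := exists_coe_eq_p_pow_mul_of_valuation_eq hred (sub_ne_zero.2 hα1) hzv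
  obtain ⟨m, rfl⟩ := hok
  exact valuation_eval_map_tPoly_mul hp hred hpo hW hWz hpW
    (dvd_of_mul_left_dvd (sq (p : ℤ_[p]) ▸ hpWz)) (fun h => dvd_sub (hW3 h) hpWz) hz hβz
    (by rintro rfl; omega)

/-- Let `p` be an odd prime, `α ∈ ℤ_p^×`, `μ ≥ 0`, `k ≥ 1` with `o_ᾱ ∣ k`, and let
`z = z^μ(α) ∈ ℚ_p` be the maximal-valuation root of `t_{o_ᾱ} = det(g^{o_ᾱ} - 1)`, of
valuation `2v_α - μ`.  Then for any `β ∈ ℚ_p` with `v(β) > 2/(p-1) - μ` (and `β ≠ z`),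
one has `v(t_k(β)) = v(β - z) + 2v(k) + μ`. -/
theorem stmt_15 (p : ℕ) [Fact p.Prime] (hp : p ≠ 2) (α : ℤ_[p]) (hα : IsUnit α) (μ : ℕ)
    (o : ℕ) (ho : 0 < o)
    (hoa : ∀ m : ℕ, 0 < m → ((p : ℤ_[p]) ∣ α ^ m - 1 ↔ o ∣ m))
    (hα1 : α ^ o ≠ 1)
    (z : ℚ_[p])
    (hz : Polynomial.eval z ((tPoly p α μ o).map (algebraMap ℤ_[p] ℚ_[p])) = 0)
    (hzv : z.valuation = 2 * (α ^ o - 1).valuation - μ)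
    (k : ℕ) (hk : 1 ≤ k) (hok : o ∣ k)
    (β : ℚ_[p]) (hβ : ((β.valuation : ℝ)) > 2 / ((p : ℝ) - 1) - μ) (hβz : β ≠ z) :
    (Polynomial.eval β ((tPoly p α μ k).map (algebraMap ℤ_[p] ℚ_[p]))).valuation =
      (β - z).valuation + 2 * (padicValNat p k : ℤ) + μ :=
  stmt_15_general p hp α hα μ o hoa hα1 z hz hzv k hk hok β hβ hβz
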